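/- Let (R,Δ) be an odd form ring, n ∈ ℕ, and (I,Ω) an odd form ideal of (R,Δ). Then the principal congruence subgroup U_{2n+1}((R,Δ),(I,Ω)) is a normal subgroup of Ũ_{2n+1}((R,Δ),(I,Ω)). -/

import Mathlib

open scoped BigOperators

noncomputable section

/-- The index set `Θ = {-n, …, n}` for the odd-dimensional unitary group. -/
abbrev Idx (n : ℕ) : Type := {i : ℤ // i ∈ Finset.Icc (-(n : ℤ)) (n : ℤ)}

namespace Idx

/-- Negation of an index. -/
def neg {n : ℕ} (i : Idx n) : Idx n :=
  ⟨-i.1, by have h := i.2; rw [Finset.mem_Icc] at h ⊢; omega⟩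

/-- The index `0`. -/
def zero (n : ℕ) : Idx n := ⟨0, by rw [Finset.mem_Icc]; omega⟩

/-- Construct an index from an integer. -/
def of (n : ℕ) (i : ℤ) (h1 : -(n : ℤ) ≤ i) (h2 : i ≤ (n : ℤ)) : Idx n :=
  ⟨i, Finset.mem_Icc.mpr ⟨h1, h2⟩⟩

end Idx

/-- The positive indices `{1, …, n}`. -/
def posIdx (n : ℕ) : Finset (Idx n) := Finset.univ.filter (fun i => 0 < i.1)

/-- The position of an index in the ordering `1, …, n, 0, -n, …, -1`. -/
def ordIdx {n : ℕ} (i : Idx n) : ℤ :=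
  if 0 < i.1 then i.1 else if i.1 = 0 then (n : ℤ) + 1 else 2 * (n : ℤ) + 2 + i.1

/-- The group `GL_{2n+1}(R)` of invertible `(2n+1) × (2n+1)` matrices. -/
abbrev GLn (R : Type*) [Ring R] (n : ℕ) : Type _ := (Matrix (Idx n) (Idx n) R)ˣ

/-- `J(Ω) = {y | ∃ z, (y, z) ∈ Ω}`. -/
def JSet {R : Type*} (Ω : Set (R × R)) : Set R := {y | ∃ z, (y, z) ∈ Ω}

/-- `M(R, Δ) = {u | u_0 ∈ J(Δ)}`. -/
def MRD {R : Type*} (Δ : Set (R × R)) (n : ℕ) : Set (Idx n → R) :=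
  {u | u (Idx.zero n) ∈ JSet Δ}

/-- `M(I, Ω) = {u | u_i ∈ I for i ∈ Θ_hb, u_0 ∈ J(Ω)}`. -/
def MIO {R : Type*} (I : Set R) (Ω : Set (R × R)) (n : ℕ) : Set (Idx n → R) :=
  {u | (∀ i : Idx n, i.1 ≠ 0 → u i ∈ I) ∧ u (Idx.zero n) ∈ JSet Ω}

/-- The data of an odd quadruple `(R, ⁻, λ, μ)`: a ring with an anti-isomorphism `bar`,
a symmetry `lam` and an element `mu` with `mu = bar mu * lam`. -/
structure OddFormRingData (R : Type*) [Ring R] where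
  bar : R → R
  lam : R
  mu : R
  bar_bijective : Function.Bijective bar
  bar_add : ∀ x y : R, bar (x + y) = bar x + bar y
  bar_mul : ∀ x y : R, bar (x * y) = bar y * bar x
  bar_one : bar 1 = 1
  bar_bar : ∀ x : R, bar (bar x) = lam * x * bar lam
  mu_symm : mu = bar mu * lam

namespace OddFormRingData

variable {R : Type*} [Ring R] (D : OddFormRingData R)

/-- Heisenberg addition `∔` on `R × R`. -/
def hAdd (a b : R × R) : R × R := (a.1 + b.1, a.2 + b.2 - D.bar a.1 * D.mu * b.1)

/-- Heisenberg negation. -/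
def hNeg (a : R × R) : R × R := (-a.1, -a.2 - D.bar a.1 * D.mu * a.1)

/-- Heisenberg subtraction `∸`. -/
def hSub (a b : R × R) : R × R := D.hAdd a (D.hNeg b)

/-- The scalar operation `(x, y) • a = (x a, ā y a)`. -/
def hSMul (a : R × R) (r : R) : R × R := (a.1 * r, D.bar r * a.2 * r)

/-- `Δ_min = {(0, x - x̄ λ) | x ∈ R}`. -/
def DeltaMin : Set (R × R) := {p | ∃ x : R, p = (0, x - D.bar x * D.lam)}

/-- `Δ_max = {(x, y) | x̄ μ x + y + ȳ λ = 0}`. -/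
def DeltaMax : Set (R × R) := {p | D.bar p.1 * D.mu * p.1 + p.2 + D.bar p.2 * D.lam = 0}

/-- `Δ` is an odd form parameter. -/
structure IsFormParam (Δ : Set (R × R)) : Prop where
  add_mem : ∀ a ∈ Δ, ∀ b ∈ Δ, D.hAdd a b ∈ Δ
  neg_mem : ∀ a ∈ Δ, D.hNeg a ∈ Δ
  smul_mem : ∀ a ∈ Δ, ∀ r : R, D.hSMul a r ∈ Δ
  min_le : D.DeltaMin ⊆ Δ
  le_max : Δ ⊆ D.DeltaMax

/-- `I` is an involution invariant (two-sided) ideal of `R`. -/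
structure IsInvIdeal (I : Set R) : Prop where
  zero_mem : (0 : R) ∈ I
  add_mem : ∀ x ∈ I, ∀ y ∈ I, x + y ∈ I
  neg_mem : ∀ x ∈ I, -x ∈ I
  mul_left : ∀ r : R, ∀ x ∈ I, r * x ∈ I
  mul_right : ∀ r : R, ∀ x ∈ I, x * r ∈ I
  bar_mem : ∀ x ∈ I, D.bar x ∈ I

/-- `Ĩ = {x | ȳ μ x ∈ I for all y ∈ J(Δ)}`. -/
def tildeI (Δ : Set (R × R)) (I : Set R) : Set R :=
  {x | ∀ y ∈ JSet Δ, D.bar y * D.mu * x ∈ I}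

/-- `Ω^I_min`, the `∔`-subgroup of `R × R` generated by `{(0, x - x̄λ) | x ∈ I}` and
`{a • c | a ∈ Δ, c ∈ I}`. -/
inductive OmegaMin (Δ : Set (R × R)) (I : Set R) : R × R → Prop
  | base (x : R) (hx : x ∈ I) : OmegaMin Δ I (0, x - D.bar x * D.lam)
  | smul (a : R × R) (ha : a ∈ Δ) (c : R) (hc : c ∈ I) : OmegaMin Δ I (D.hSMul a c)
  | add (a b : R × R) : OmegaMin Δ I a → OmegaMin Δ I b → OmegaMin Δ I (D.hAdd a b)
  | neg (a : R × R) : OmegaMin Δ I a → OmegaMin Δ I (D.hNeg a)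

/-- `Ω^I_min` as a set. -/
def OmegaMinSet (Δ : Set (R × R)) (I : Set R) : Set (R × R) := {p | D.OmegaMin Δ I p}

/-- `Ω^I_max = Δ ∩ (Ĩ × I)`. -/
def OmegaMaxSet (Δ : Set (R × R)) (I : Set R) : Set (R × R) :=
  {p | p ∈ Δ ∧ p.1 ∈ D.tildeI Δ I ∧ p.2 ∈ I}

/-- `Ω` is a relative odd form parameter for `I`. -/
structure IsRelFormParam (Δ : Set (R × R)) (I : Set R) (Ω : Set (R × R)) : Prop where
  add_mem : ∀ a ∈ Ω, ∀ b ∈ Ω, D.hAdd a b ∈ Ω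
  neg_mem : ∀ a ∈ Ω, D.hNeg a ∈ Ω
  smul_mem : ∀ a ∈ Ω, ∀ r : R, D.hSMul a r ∈ Ω
  min_le : D.OmegaMinSet Δ I ⊆ Ω
  le_max : Ω ⊆ D.OmegaMaxSet Δ I

/-- `(I, Ω)` is an odd form ideal of `(R, Δ)`. -/
def IsFormIdeal (Δ : Set (R × R)) (I : Set R) (Ω : Set (R × R)) : Prop :=
  D.IsInvIdeal I ∧ D.IsRelFormParam Δ I Ω

/-- `Ω^{-1} = {(x, y) | (x, ȳ) ∈ Ω}`. -/
def paramInv (Ω : Set (R × R)) : Set (R × R) := {p | (p.1, D.bar p.2) ∈ Ω}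

/-- `Ω^{-ε(i)}`. -/
def paramPow {n : ℕ} (Ω : Set (R × R)) (i : Idx n) : Set (R × R) :=
  if 0 < i.1 then D.paramInv Ω else Ω

/-- The λ-Hermitian form `b`. -/
def bform {n : ℕ} (u v : Idx n → R) : R :=
  (∑ i ∈ posIdx n, D.bar (u i) * v i.neg) + D.bar (u (Idx.zero n)) * D.mu * v (Idx.zero n)
    + ∑ i ∈ posIdx n, D.bar (u i.neg) * D.lam * v i

/-- The quadratic map `q`. -/
def qform {n : ℕ} (u : Idx n → R) : R × R :=
  (u (Idx.zero n), ∑ i ∈ posIdx n, D.bar (u i) * u i.neg)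

/-- The odd-dimensional unitary group `U_{2n+1}(R, Δ)`, as a subset of `GL_{2n+1}(R)`. -/
def unitary (Δ : Set (R × R)) (n : ℕ) : Set (GLn R n) :=
  {σ | (∀ u v : Idx n → R,
          D.bform (Matrix.mulVec σ.val u)
            (Matrix.mulVec σ.val v) = D.bform u v)
      ∧ ∀ u : Idx n → R,
          D.hSub (D.qform (Matrix.mulVec σ.val u)) (D.qform u) ∈ Δ}

/-- The short root matrix `T_{ij}(x)`. -/
def shortRootMat {n : ℕ} (i j : Idx n) (x : R) : Matrix (Idx n) (Idx n) R :=
  1 + Matrix.single i j x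
    - Matrix.single j.neg i.neg
        ((if 0 < j.1 then (1 : R) else D.bar D.lam) * D.bar x *
          (if 0 < i.1 then (1 : R) else D.lam))

/-- The extra short root matrix `T_i(x, y)`. -/
def extraShortRootMat {n : ℕ} (i : Idx n) (x y : R) : Matrix (Idx n) (Idx n) R :=
  1 + Matrix.single (Idx.zero n) i.neg x
    - Matrix.single i (Idx.zero n)
        ((if 0 < i.1 then D.bar D.lam else (1 : R)) * D.bar x * D.mu)
    + Matrix.single i i.neg y

/-- `g` is a short root matrix `T_{ij}(x)`. -/
def IsShortRootElem {n : ℕ} (g : GLn R n) : Prop :=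
  ∃ (i j : Idx n) (x : R), i.1 ≠ 0 ∧ j.1 ≠ 0 ∧ i.1 ≠ j.1 ∧ i.1 ≠ -j.1 ∧
    g.val = D.shortRootMat i j x

/-- `g` is an extra short root matrix `T_i(x, y)` with `(x, y) ∈ Δ^{-ε(i)}`. -/
def IsExtraShortRootElem {n : ℕ} (Δ : Set (R × R)) (g : GLn R n) : Prop :=
  ∃ (i : Idx n) (x y : R), i.1 ≠ 0 ∧ (x, y) ∈ D.paramPow Δ i ∧
    g.val = D.extraShortRootMat i x y

/-- The elementary subgroup `EU_{2n+1}(R, Δ)`. -/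
def elemGroup (Δ : Set (R × R)) (n : ℕ) : Subgroup (GLn R n) :=
  Subgroup.closure {g | D.IsShortRootElem g ∨ D.IsExtraShortRootElem Δ g}

/-- `g` is an `(I, Ω)`-elementary short root matrix. -/
def IsRelShortRootElem {n : ℕ} (I : Set R) (g : GLn R n) : Prop :=
  ∃ (i j : Idx n) (x : R), i.1 ≠ 0 ∧ j.1 ≠ 0 ∧ i.1 ≠ j.1 ∧ i.1 ≠ -j.1 ∧ x ∈ I ∧
    g.val = D.shortRootMat i j x

/-- `g` is an `(I, Ω)`-elementary extra short root matrix. -/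
def IsRelExtraShortRootElem {n : ℕ} (Ω : Set (R × R)) (g : GLn R n) : Prop :=
  ∃ (i : Idx n) (x y : R), i.1 ≠ 0 ∧ (x, y) ∈ D.paramPow Ω i ∧
    g.val = D.extraShortRootMat i x y

/-- The preelementary subgroup `EU_{2n+1}(I, Ω)`. -/
def preElemGroup (I : Set R) (Ω : Set (R × R)) (n : ℕ) : Subgroup (GLn R n) :=
  Subgroup.closure {g | D.IsRelShortRootElem I g ∨ D.IsRelExtraShortRootElem Ω g}

/-- The relative elementary subgroup `EU_{2n+1}((R, Δ), (I, Ω))`,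
the normal closure of `EU_{2n+1}(I, Ω)` in `EU_{2n+1}(R, Δ)`. -/
def elemRelGroup (Δ : Set (R × R)) (I : Set R) (Ω : Set (R × R)) (n : ℕ) : Subgroup (GLn R n) :=
  Subgroup.closure {x | ∃ e ∈ D.elemGroup Δ n, ∃ g ∈ D.preElemGroup I Ω n, x = e * g * e⁻¹}

/-- The principal congruence subgroup `U_{2n+1}((R, Δ), (I, Ω))`. -/
def principalCongruence (Δ : Set (R × R)) (I : Set R) (Ω : Set (R × R)) (n : ℕ) :
    Set (GLn R n) :=
  {σ | σ ∈ D.unitary Δ n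
      ∧ (∀ i j : Idx n, i.1 ≠ 0 → j.1 ≠ 0 →
          σ.val i j - (if i = j then (1 : R) else 0) ∈ I)
      ∧ ∀ u ∈ MRD Δ n,
          D.hSub (D.qform (Matrix.mulVec σ.val u)) (D.qform u) ∈ Ω}

/-- The group `Ũ_{2n+1}((R, Δ), (I, Ω))`. -/
def tildeU (Δ : Set (R × R)) (I : Set R) (Ω : Set (R × R)) (n : ℕ) : Set (GLn R n) :=
  {σ | σ ∈ D.unitary Δ n ∧ ∀ u ∈ MIO I Ω n,
      D.hSub (D.qform (Matrix.mulVec σ.val u)) (D.qform u) ∈ Ω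
      ∧ D.hSub (D.qform (Matrix.mulVec ((σ⁻¹).val) u)) (D.qform u) ∈ Ω}

/-- The full congruence subgroup `CU_{2n+1}((R, Δ), (I, Ω))`. -/
def fullCongruence (Δ : Set (R × R)) (I : Set R) (Ω : Set (R × R)) (n : ℕ) : Set (GLn R n) :=
  {σ | σ ∈ D.tildeU Δ I Ω n ∧ ∀ τ ∈ D.elemGroup Δ n,
      σ * τ * σ⁻¹ * τ⁻¹ ∈ D.principalCongruence Δ I Ω n}

/-- `H` is a subgroup of `U_{2n+1}(R, Δ)`. -/
structure IsSubgroupOfUnitary (Δ : Set (R × R)) (n : ℕ) (H : Set (GLn R n)) : Prop where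
  subset : H ⊆ D.unitary Δ n
  one_mem : (1 : GLn R n) ∈ H
  mul_mem : ∀ a ∈ H, ∀ b ∈ H, a * b ∈ H
  inv_mem : ∀ a ∈ H, a⁻¹ ∈ H

/-- `H` is normalized by the elementary subgroup `EU_{2n+1}(R, Δ)`. -/
def IsENormal (Δ : Set (R × R)) (n : ℕ) (H : Set (GLn R n)) : Prop :=
  ∀ e ∈ D.elemGroup Δ n, ∀ h ∈ H, e * h * e⁻¹ ∈ H

/-- The ideal part of the level of `H`. -/
def levelI {n : ℕ} (H : Set (GLn R n)) : Set R :=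
  {x | ∃ i j : Idx n, i.1 ≠ 0 ∧ j.1 ≠ 0 ∧ i.1 ≠ j.1 ∧ i.1 ≠ -j.1 ∧
      ∃ g ∈ H, g.val = D.shortRootMat i j x}

/-- The form parameter part of the level of `H`. -/
def levelOmega {n : ℕ} (Δ : Set (R × R)) (H : Set (GLn R n)) : Set (R × R) :=
  {p | p ∈ Δ ∧ ∃ i : Idx n, i.1 < 0 ∧
      ∃ g ∈ H, g.val = D.extraShortRootMat i p.1 p.2}

/-- The relative odd form parameter `^σΩ` for `I` defined by `Ω` and `σ`. -/
def transportedParam (Δ : Set (R × R)) (I : Set R) (Ω : Set (R × R)) (n : ℕ) (σ : GLn R n) :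
    Set (R × R) :=
  {p | ∃ x y : R, (x, y) ∈ Ω ∧ ∃ m ∈ D.OmegaMinSet Δ I,
      p = D.hAdd (D.hAdd
            (D.hSMul
              (D.hSub (D.qform (fun i => σ.val i (Idx.zero n)))
                ((1 : R), (0 : R))) x)
            (x, y)) m}

/-- `TEU_{2n+1}(R, Δ)`: upper triangular elementary matrices with ones on the diagonal,
with respect to the index ordering `1, …, n, 0, -n, …, -1`. -/
def upperTriangularElem (Δ : Set (R × R)) (n : ℕ) : Set (GLn R n) :=
  {f | f ∈ D.elemGroup Δ n
      ∧ (∀ i j : Idx n, ordIdx j < ordIdx i → f.val i j = 0)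
      ∧ ∀ i : Idx n, f.val i i = 1}

/-- `UEU_{2n+1}(R, Δ)`: elementary matrices of block form `(A B C; 0 1 D; 0 0 E)`
with respect to the decomposition `Θ₊, {0}, Θ₋`. -/
def blockUpperElem (Δ : Set (R × R)) (n : ℕ) : Set (GLn R n) :=
  {f | f ∈ D.elemGroup Δ n
      ∧ (∀ i j : Idx n, i.1 ≤ 0 → 0 < j.1 → f.val i j = 0)
      ∧ f.val (Idx.zero n) (Idx.zero n) = 1
      ∧ ∀ i : Idx n, i.1 < 0 → f.val i (Idx.zero n) = 0}

/-- `R` is quasifinite: it is the union of a directed family of subrings, each closed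
under the involution, containing `λ` and `μ`, and finitely generated as a module over its
center. -/
def IsQuasifinite : Prop :=
  ∃ S : Set (Subring R), S.Nonempty ∧ DirectedOn (· ≤ ·) S ∧
    (∀ A ∈ S, (∀ x ∈ A, D.bar x ∈ A) ∧ D.lam ∈ A ∧ D.mu ∈ A ∧
      ∃ (m : ℕ) (v : Fin m → R), (∀ k, v k ∈ A) ∧
        ∀ x ∈ A, ∃ c : Fin m → R,
          (∀ k, c k ∈ A ∧ ∀ y ∈ A, c k * y = y * c k) ∧ x = ∑ k, c k * v k) ∧
    ∀ x : R, ∃ A ∈ S, x ∈ A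

end OddFormRingData

/-- The Jacobson radical of a (possibly noncommutative) ring. -/
def jacobsonRadical (R : Type*) [Ring R] : Ideal R := sInf {J : Ideal R | J.IsMaximal}

/-- `R` is semilocal: `R / rad R` is semisimple (hence semisimple Artinian). -/
def IsSemilocalRing (R : Type*) [Ring R] : Prop :=
  IsSemisimpleModule R (R ⧸ jacobsonRadical R)

/-- A bundled (possibly noncommutative) ring. -/
structure BundledRing : Type (u + 1) where
  carrier : Type u
  [str : Ring carrier]

attribute [instance] BundledRing.str

instance : CoeSort BundledRing (Type u) := ⟨BundledRing.carrier⟩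

universe u


/-!
Put `γ = σ τ σ⁻¹` and write a vector as `u = σ v`; then `γ u = u + σ d` with `d = τ v - v`.
Because `τ` is congruent to the identity, `d ∈ M(I, Ω)` as soon as `v ∈ M(R, Δ)`. A hyperbolic
coordinate of `σ d` is, up to the unit `λ`, the value `b(e₋ᵢ, σ d) = b(σ⁻¹ e₋ᵢ, d)`, which lies
in `I` since `b(M(R, Δ), M(I, Ω)) ⊆ I`; this gives the congruence of the entries of `γ`.

For the quadratic condition, expand `q(u + σ d) ∸ q(u)` and `q(v + d) ∸ q(v)` in the Heisenberg
group `(R × R, ∔)`. The first is the product of a `q(u)`-conjugate of `q(σ d) ∸ q(d)`, which lies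
in `Ω` because `σ ∈ Ũ`, a conjugate of `q(v + d) ∸ q(v) ∈ Ω`, and a central element
`(0, c - c̄ λ)` with `c ∈ I`: the `b`-parts cancel as `b(σ v, σ d) = b(v, d)`. Conjugation by
elements with first coordinate in `J(Δ)` preserves `Ω`.
-/

open scoped Matrix

namespace Idx

variable {n : ℕ}

@[simp] lemma neg_val (i : Idx n) : i.neg.1 = -i.1 := rfl

@[simp] lemma neg_neg (i : Idx n) : i.neg.neg = i := Subtype.ext (by simp [Idx.neg])

lemma neg_eq_iff {i j : Idx n} : i.neg = j ↔ i = j.neg := by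
  constructor <;> rintro rfl <;> simp

lemma eq_zero_iff {i : Idx n} : i = Idx.zero n ↔ i.1 = 0 := by
  rw [Subtype.ext_iff]
  rfl

end Idx

lemma mem_posIdx {n : ℕ} {i : Idx n} : i ∈ posIdx n ↔ 0 < i.1 := by
  simp [posIdx]

lemma fst_mem_JSet {R : Type*} {S : Set (R × R)} {p : R × R} (h : p ∈ S) : p.1 ∈ JSet S :=
  ⟨p.2, h⟩

lemma single_apply_zero {R : Type*} [Ring R] {n : ℕ} {k : Idx n} (hk : k.1 ≠ 0) (a : R) :
    (Pi.single k a : Idx n → R) (Idx.zero n) = 0 := by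
  rw [Pi.single_apply, if_neg fun h => hk (Idx.eq_zero_iff.mp h.symm)]

section GeneralLinear

variable {R : Type*} [Ring R] {n : ℕ}

lemma mulVec_mulVec_inv (σ : GLn R n) (w : Idx n → R) : σ.val *ᵥ ((σ⁻¹).val *ᵥ w) = w := by
  rw [Matrix.mulVec_mulVec, ← Units.val_mul, mul_inv_cancel, Units.val_one, Matrix.one_mulVec]

lemma mulVec_inv_mulVec (σ : GLn R n) (w : Idx n → R) : (σ⁻¹).val *ᵥ (σ.val *ᵥ w) = w := by
  simp

lemma conj_mulVec (σ τ : GLn R n) (x : Idx n → R) :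
    (σ * τ * σ⁻¹).val *ᵥ x = x + σ.val *ᵥ (τ.val *ᵥ ((σ⁻¹).val *ᵥ x) - (σ⁻¹).val *ᵥ x) := by
  rw [Units.val_mul, Units.val_mul, ← Matrix.mulVec_mulVec, ← Matrix.mulVec_mulVec,
    Matrix.mulVec_sub, mulVec_mulVec_inv, add_sub_cancel]

end GeneralLinear

namespace OddFormRingData

section Involution

variable {R : Type*} [Ring R] (D : OddFormRingData R)

@[simp] lemma bar_zero : D.bar 0 = 0 := by
  simpa using D.bar_add 0 0

@[simp] lemma bar_neg (x : R) : D.bar (-x) = -D.bar x :=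
  eq_neg_of_add_eq_zero_left (by rw [← D.bar_add, neg_add_cancel, bar_zero])

lemma bar_sub (x y : R) : D.bar (x - y) = D.bar x - D.bar y := by
  rw [sub_eq_add_neg, D.bar_add, D.bar_neg, sub_eq_add_neg]

lemma bar_sum {ι : Type*} (s : Finset ι) (f : ι → R) :
    D.bar (∑ i ∈ s, f i) = ∑ i ∈ s, D.bar (f i) :=
  map_sum (AddMonoidHom.mk' D.bar D.bar_add) f s

lemma lam_mul_bar_lam : D.lam * D.bar D.lam = 1 := by
  simpa [D.bar_one] using (D.bar_bar 1).symm

lemma bar_lam_mul_lam : D.bar D.lam * D.lam = 1 := by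
  apply D.bar_bijective.injective.comp D.bar_bijective.injective
  simp only [Function.comp_apply, D.bar_bar, D.bar_one, ← mul_assoc, D.lam_mul_bar_lam]
  rw [one_mul, D.lam_mul_bar_lam]

lemma bar_bar_mul_lam (x : R) : D.bar (D.bar x) * D.lam = D.lam * x := by
  rw [D.bar_bar, mul_assoc, mul_assoc, D.bar_lam_mul_lam, mul_one]

lemma bar_bar_mul_mu_mul_mul_lam (x y : R) :
    D.bar (D.bar x * D.mu * y) * D.lam = D.bar y * D.mu * x := by
  rw [D.bar_mul, D.bar_mul, mul_assoc, mul_assoc, D.bar_bar_mul_lam,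
    ← mul_assoc (D.bar D.mu), ← D.mu_symm, ← mul_assoc]

end Involution

section Heisenberg

variable {R : Type*} [Ring R] (D : OddFormRingData R)

def hConj (a w : R × R) : R × R := D.hAdd (D.hAdd a w) (D.hNeg a)

lemma hSub_fst (a b : R × R) : (D.hSub a b).1 = a.1 - b.1 := by
  simp [hSub, hAdd, hNeg, sub_eq_add_neg]

lemma hNeg_hSub (a b : R × R) : D.hNeg (D.hSub a b) = D.hSub b a := by
  simp only [hSub, hAdd, hNeg, D.bar_add, D.bar_neg, Prod.mk.injEq]
  exact ⟨by abel, by noncomm_ring⟩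

lemma hSub_hAdd_hSub (a b c : R × R) : D.hAdd (D.hSub a b) (D.hSub b c) = D.hSub a c := by
  simp only [hSub, hAdd, hNeg, D.bar_add, D.bar_neg, Prod.mk.injEq]
  exact ⟨by abel, by noncomm_ring⟩

lemma hAdd_zero_right (a : R × R) (z : R) : D.hAdd a (0, z) = (a.1, a.2 + z) := by
  simp [hAdd]

lemma hConj_eq (a w : R × R) :
    D.hConj a w = (w.1, w.2 + (D.bar w.1 * D.mu * a.1 - D.bar a.1 * D.mu * w.1)) := by
  simp only [hConj, hAdd, hNeg, D.bar_add, Prod.mk.injEq]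
  exact ⟨by abel, by noncomm_ring⟩

/-- Conjugation is an action and `(0, z)` is central, so the `(a ∸ c)`-conjugate of a
`c`-conjugate is an `a`-conjugate. -/
lemma hConj_hAdd_central_eq (a b c e : R × R) (β z₁ z₂ : R) :
    D.hAdd (D.hConj a b) (0, β + z₁) =
      D.hAdd (D.hAdd (D.hConj a (D.hSub b e))
        (D.hConj (D.hSub a c) (D.hAdd (D.hConj c e) (0, β + z₂)))) (0, z₁ - z₂) := by
  obtain ⟨a1, a2⟩ := a; obtain ⟨b1, b2⟩ := b; obtain ⟨c1, c2⟩ := c; obtain ⟨e1, e2⟩ := e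
  simp only [hConj, hSub, hAdd, hNeg, D.bar_add, D.bar_neg, D.bar_zero, Prod.mk.injEq]
  exact ⟨by abel, by noncomm_ring⟩

end Heisenberg

section Forms

variable {R : Type*} [Ring R] (D : OddFormRingData R) {n : ℕ}

def crossTerm (u v : Idx n → R) : R := ∑ i ∈ posIdx n, D.bar (v i) * u i.neg

lemma qform_fst (u : Idx n → R) : (D.qform u).1 = u (Idx.zero n) := rfl

lemma qform_add (u v : Idx n → R) :
    D.qform (u + v) = D.hAdd (D.hAdd (D.qform u) (D.qform v))
      (0, D.bform u v + (D.crossTerm u v - D.bar (D.crossTerm u v) * D.lam)) := by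
  have hbar : D.bar (D.crossTerm u v) * D.lam =
      ∑ i ∈ posIdx n, D.bar (u i.neg) * D.lam * v i := by
    rw [crossTerm, D.bar_sum, Finset.sum_mul]
    refine Finset.sum_congr rfl fun i _ => ?_
    rw [D.bar_mul, mul_assoc, D.bar_bar_mul_lam, ← mul_assoc]
  rw [hbar]
  simp only [qform, hAdd, bform, crossTerm, Pi.add_apply, D.bar_add, add_mul, mul_add,
    Finset.sum_add_distrib, mul_zero, Prod.mk.injEq]
  exact ⟨(add_zero _).symm, by abel⟩

lemma hSub_qform_add (u v : Idx n → R) :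
    D.hSub (D.qform (u + v)) (D.qform u) = D.hAdd (D.hConj (D.qform u) (D.qform v))
      (0, D.bform u v + (D.crossTerm u v - D.bar (D.crossTerm u v) * D.lam)) := by
  rw [D.qform_add]
  generalize D.qform u = a; generalize D.qform v = b
  simp only [hConj, hSub, hAdd, hNeg, D.bar_add, D.bar_neg, D.bar_zero, Prod.mk.injEq]
  exact ⟨by abel, by noncomm_ring⟩

lemma bform_single_one_left_of_pos (v : Idx n → R) {k : Idx n} (hk : 0 < k.1) :
    D.bform (Pi.single k 1) v = v k.neg := by
  have hk0 : k ≠ Idx.zero n := by rw [Ne, Idx.eq_zero_iff]; omega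
  simp [bform, Pi.single_apply, apply_ite D.bar, D.bar_one, Idx.neg_eq_iff, mem_posIdx, hk, hk0]
  omega

lemma bform_single_one_left_of_neg (v : Idx n → R) {k : Idx n} (hk : k.1 < 0) :
    D.bform (Pi.single k 1) v = D.lam * v k.neg := by
  have hk0 : k ≠ Idx.zero n := by rw [Ne, Idx.eq_zero_iff]; omega
  simp [bform, Pi.single_apply, apply_ite D.bar, D.bar_one, Idx.neg_eq_iff, mem_posIdx, hk, hk0]
  omega

lemma bform_single_zero_right (x : Idx n → R) (a : R) :
    D.bform x (Pi.single (Idx.zero n) a) = D.bar (x (Idx.zero n)) * D.mu * a := by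
  have hpos : ∀ i ∈ posIdx n, ¬(i : ℤ) = 0 := fun i hi => (mem_posIdx.mp hi).ne'
  simp [bform, Pi.single_apply, Idx.eq_zero_iff, Finset.sum_ite_of_false hpos]

end Forms

variable {R : Type*} [Ring R] {D : OddFormRingData R} {n : ℕ}
variable {Δ : Set (R × R)} {I : Set R} {Ω : Set (R × R)}

namespace IsInvIdeal

lemma sub_mem (hI : D.IsInvIdeal I) {x y : R} (hx : x ∈ I) (hy : y ∈ I) : x - y ∈ I := by
  simpa [sub_eq_add_neg] using hI.add_mem x hx _ (hI.neg_mem y hy)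

lemma sum_mem (hI : D.IsInvIdeal I) {ι : Type*} (s : Finset ι) {f : ι → R}
    (h : ∀ i ∈ s, f i ∈ I) : ∑ i ∈ s, f i ∈ I :=
  Finset.sum_induction f (· ∈ I) (fun a b ha hb => hI.add_mem a ha b hb) hI.zero_mem h

lemma mem_of_lam_mul_mem (hI : D.IsInvIdeal I) {x : R} (h : D.lam * x ∈ I) : x ∈ I := by
  simpa [← mul_assoc, D.bar_lam_mul_lam] using hI.mul_left (D.bar D.lam) _ h

lemma mem_of_bform_single_one_mem (hI : D.IsInvIdeal I) {k : Idx n} (hk : k.1 ≠ 0)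
    {v : Idx n → R} (h : D.bform (Pi.single k 1) v ∈ I) : v k.neg ∈ I := by
  rcases hk.lt_or_gt with hneg | hpos
  · rw [D.bform_single_one_left_of_neg v hneg] at h
    exact hI.mem_of_lam_mul_mem h
  · rwa [D.bform_single_one_left_of_pos v hpos] at h

lemma crossTerm_mem (hI : D.IsInvIdeal I) (u : Idx n → R) {v : Idx n → R}
    (hv : ∀ i : Idx n, i.1 ≠ 0 → v i ∈ I) : D.crossTerm u v ∈ I :=
  hI.sum_mem _ fun i hi => hI.mul_right _ _ (hI.bar_mem _ (hv i (mem_posIdx.mp hi).ne'))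

end IsInvIdeal

namespace IsFormParam

lemma zero_mem (hΔ : D.IsFormParam Δ) : ((0 : R), (0 : R)) ∈ Δ := by
  simpa using hΔ.min_le ⟨0, rfl⟩

lemma zero_mem_JSet (hΔ : D.IsFormParam Δ) : (0 : R) ∈ JSet Δ := fst_mem_JSet hΔ.zero_mem

lemma add_mem_JSet (hΔ : D.IsFormParam Δ) {x y : R} (hx : x ∈ JSet Δ) (hy : y ∈ JSet Δ) :
    x + y ∈ JSet Δ := by
  obtain ⟨_, hx⟩ := hx; obtain ⟨_, hy⟩ := hy
  exact fst_mem_JSet (hΔ.add_mem _ hx _ hy)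

lemma neg_mem_JSet (hΔ : D.IsFormParam Δ) {x : R} (hx : x ∈ JSet Δ) : -x ∈ JSet Δ := by
  obtain ⟨_, hx⟩ := hx
  exact fst_mem_JSet (hΔ.neg_mem _ hx)

lemma sub_mem_JSet (hΔ : D.IsFormParam Δ) {x y : R} (hx : x ∈ JSet Δ) (hy : y ∈ JSet Δ) :
    x - y ∈ JSet Δ := by
  simpa [sub_eq_add_neg] using hΔ.add_mem_JSet hx (hΔ.neg_mem_JSet hy)

lemma single_mem_MRD (hΔ : D.IsFormParam Δ) {k : Idx n} (hk : k.1 ≠ 0) (a : R) :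
    (Pi.single k a : Idx n → R) ∈ MRD Δ n := by
  show (Pi.single k a : Idx n → R) (Idx.zero n) ∈ JSet Δ
  rw [single_apply_zero hk]
  exact hΔ.zero_mem_JSet

end IsFormParam

namespace IsFormIdeal

lemma JSet_subset (hIΩ : D.IsFormIdeal Δ I Ω) : JSet Ω ⊆ JSet Δ :=
  fun _ ⟨z, hz⟩ => ⟨z, (hIΩ.2.le_max hz).1⟩

lemma sub_bar_mul_lam_mem (hIΩ : D.IsFormIdeal Δ I Ω) {c : R} (hc : c ∈ I) :
    ((0 : R), c - D.bar c * D.lam) ∈ Ω :=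
  hIΩ.2.min_le (OmegaMin.base c hc)

lemma bar_mul_mu_mul_mem (hIΩ : D.IsFormIdeal Δ I Ω) {y s : R} (hy : y ∈ JSet Δ)
    (hs : s ∈ JSet Ω) : D.bar y * D.mu * s ∈ I := by
  obtain ⟨t, ht⟩ := hs
  exact (hIΩ.2.le_max ht).2.1 y hy

lemma bar_mul_mu_mul_mem' (hIΩ : D.IsFormIdeal Δ I Ω) {s y : R} (hs : s ∈ JSet Ω)
    (hy : y ∈ JSet Δ) : D.bar s * D.mu * y ∈ I := by
  rw [← D.bar_bar_mul_mu_mul_mul_lam]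
  exact hIΩ.1.mul_right _ _ (hIΩ.1.bar_mem _ (hIΩ.bar_mul_mu_mul_mem hy hs))

/-- The commutator `(0, w̄₁ μ a₁ - ā₁ μ w₁)` has the form `(0, c - c̄ λ)` with `c ∈ I`. -/
lemma hConj_mem (hIΩ : D.IsFormIdeal Δ I Ω) {a w : R × R} (ha : a.1 ∈ JSet Δ) (hw : w ∈ Ω) :
    D.hConj a w ∈ Ω := by
  have hc := hIΩ.sub_bar_mul_lam_mem (hIΩ.bar_mul_mu_mul_mem' (fst_mem_JSet hw) ha)
  rw [D.bar_bar_mul_mu_mul_mul_lam] at hc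
  simpa [D.hConj_eq, D.hAdd_zero_right] using hIΩ.2.add_mem _ hw _ hc

lemma bform_mem (hIΩ : D.IsFormIdeal Δ I Ω) {x d : Idx n → R} (hx : x ∈ MRD Δ n)
    (hd : d ∈ MIO I Ω n) : D.bform x d ∈ I := by
  have hI := hIΩ.1
  refine hI.add_mem _ (hI.add_mem _ ?_ _ (hIΩ.bar_mul_mu_mul_mem hx hd.2)) _ ?_
  · exact hI.sum_mem _ fun i hi => hI.mul_left _ _ (hd.1 _ (by simp [(mem_posIdx.mp hi).ne']))
  · exact hI.sum_mem _ fun i hi => hI.mul_left _ _ (hd.1 _ (mem_posIdx.mp hi).ne')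

lemma hSub_qform_add_mem (hΔ : D.IsFormParam Δ) (hIΩ : D.IsFormIdeal Δ I Ω)
    {u v d G : Idx n → R} (hu : u ∈ MRD Δ n) (hv : v ∈ MRD Δ n)
    (hd : ∀ i : Idx n, i.1 ≠ 0 → d i ∈ I) (hG : ∀ i : Idx n, i.1 ≠ 0 → G i ∈ I)
    (hb : D.bform u G = D.bform v d) (hvd : D.hSub (D.qform (v + d)) (D.qform v) ∈ Ω)
    (hGd : D.hSub (D.qform G) (D.qform d) ∈ Ω) :
    D.hSub (D.qform (u + G)) (D.qform u) ∈ Ω := by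
  rw [D.hSub_qform_add] at hvd ⊢
  rw [hb, D.hConj_hAdd_central_eq _ _ (D.qform v) (D.qform d)]
  have hc : D.crossTerm u G - D.crossTerm v d ∈ I :=
    hIΩ.1.sub_mem (hIΩ.1.crossTerm_mem u hG) (hIΩ.1.crossTerm_mem v hd)
  refine hIΩ.2.add_mem _ (hIΩ.2.add_mem _ (hIΩ.hConj_mem (a := D.qform u) hu hGd) _
    (hIΩ.hConj_mem ?_ hvd)) _ ?_
  · rw [D.hSub_fst]
    exact hΔ.sub_mem_JSet hu hv
  · convert hIΩ.sub_bar_mul_lam_mem hc using 2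
    rw [D.bar_sub]
    noncomm_ring

end IsFormIdeal

section Unitary

variable {σ τ : GLn R n}

lemma mul_mem_unitary (hΔ : D.IsFormParam Δ) (hσ : σ ∈ D.unitary Δ n)
    (hτ : τ ∈ D.unitary Δ n) : σ * τ ∈ D.unitary Δ n := by
  refine ⟨fun u v => ?_, fun u => ?_⟩
  · rw [Units.val_mul, ← Matrix.mulVec_mulVec, ← Matrix.mulVec_mulVec, hσ.1, hτ.1]
  · rw [Units.val_mul, ← Matrix.mulVec_mulVec, ← D.hSub_hAdd_hSub _ (D.qform (τ.val *ᵥ u))]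
    exact hΔ.add_mem _ (hσ.2 _) _ (hτ.2 u)

lemma inv_mem_unitary (hΔ : D.IsFormParam Δ) (hσ : σ ∈ D.unitary Δ n) :
    σ⁻¹ ∈ D.unitary Δ n := by
  refine ⟨fun u v => ?_, fun u => ?_⟩
  · rw [← hσ.1, mulVec_mulVec_inv, mulVec_mulVec_inv]
  · rw [← D.hNeg_hSub]
    refine hΔ.neg_mem _ ?_
    simpa [mulVec_mulVec_inv] using hσ.2 ((σ⁻¹).val *ᵥ u)

lemma bform_mulVec_right (hσ : σ ∈ D.unitary Δ n) (x y : Idx n → R) :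
    D.bform x (σ.val *ᵥ y) = D.bform ((σ⁻¹).val *ᵥ x) y := by
  conv_rhs => rw [← hσ.1, mulVec_mulVec_inv]

lemma mulVec_mem_MRD (hΔ : D.IsFormParam Δ) (hσ : σ ∈ D.unitary Δ n) {u : Idx n → R}
    (hu : u ∈ MRD Δ n) : σ.val *ᵥ u ∈ MRD Δ n := by
  have h := hΔ.add_mem_JSet (fst_mem_JSet (hσ.2 u)) hu
  rwa [D.hSub_fst, D.qform_fst, D.qform_fst, sub_add_cancel] at h

lemma mulVec_apply_mem (hΔ : D.IsFormParam Δ) (hIΩ : D.IsFormIdeal Δ I Ω)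
    (hσ : σ ∈ D.unitary Δ n) {d : Idx n → R} (hd : d ∈ MIO I Ω n) {i : Idx n} (hi : i.1 ≠ 0) :
    (σ.val *ᵥ d) i ∈ I := by
  have hi' : i.neg.1 ≠ 0 := by simpa using hi
  simpa using hIΩ.1.mem_of_bform_single_one_mem hi' <| by
    rw [bform_mulVec_right hσ]
    exact hIΩ.bform_mem
      (mulVec_mem_MRD hΔ (inv_mem_unitary hΔ hσ) (hΔ.single_mem_MRD hi' 1)) hd

end Unitary

section PrincipalCongruence

variable {σ τ : GLn R n}

lemma inv_qform_sub_mem (hΔ : D.IsFormParam Δ) (hIΩ : D.IsFormIdeal Δ I Ω)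
    (hτ : τ ∈ D.principalCongruence Δ I Ω n) {w : Idx n → R} (hw : w ∈ MRD Δ n) :
    D.hSub (D.qform ((τ⁻¹).val *ᵥ w)) (D.qform w) ∈ Ω := by
  have h := hτ.2.2 _ (mulVec_mem_MRD hΔ (inv_mem_unitary hΔ hτ.1) hw)
  rw [mulVec_mulVec_inv] at h
  simpa [D.hNeg_hSub] using hIΩ.2.neg_mem _ h

/-- `τᵢ₀ a` is read off through `b` against `e₋ᵢ`, which brings in the row entry `(τ⁻¹)₀,₋ᵢ`;
that entry lies in `J(Ω)`, and `J(Ω) ⊆ Ĩ`. -/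
lemma apply_zero_mul_mem (hΔ : D.IsFormParam Δ) (hIΩ : D.IsFormIdeal Δ I Ω)
    (hτ : τ ∈ D.principalCongruence Δ I Ω n) {i : Idx n} (hi : i.1 ≠ 0) {a : R}
    (ha : a ∈ JSet Δ) : τ.val i (Idx.zero n) * a ∈ I := by
  have hi' : i.neg.1 ≠ 0 := by simpa using hi
  have hrow : ((τ⁻¹).val *ᵥ Pi.single i.neg 1) (Idx.zero n) ∈ JSet Ω := by
    have h := fst_mem_JSet (inv_qform_sub_mem hΔ hIΩ hτ (hΔ.single_mem_MRD hi' 1))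
    rwa [D.hSub_fst, D.qform_fst, D.qform_fst, single_apply_zero hi', sub_zero] at h
  have h := hIΩ.1.mem_of_bform_single_one_mem hi' (v := τ.val *ᵥ Pi.single (Idx.zero n) a) <| by
    rw [bform_mulVec_right hτ.1, D.bform_single_zero_right]
    exact hIΩ.bar_mul_mu_mul_mem' hrow ha
  simpa [Matrix.mulVec_single] using h

lemma mulVec_sub_mem_MIO (hΔ : D.IsFormParam Δ) (hIΩ : D.IsFormIdeal Δ I Ω)
    (hτ : τ ∈ D.principalCongruence Δ I Ω n) {v : Idx n → R} (hv : v ∈ MRD Δ n) :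
    τ.val *ᵥ v - v ∈ MIO I Ω n := by
  refine ⟨fun i hi => ?_, ?_⟩
  · rw [show τ.val *ᵥ v - v = (τ.val - 1) *ᵥ v by rw [Matrix.sub_mulVec, Matrix.one_mulVec]]
    refine hIΩ.1.sum_mem (Finset.univ : Finset (Idx n)) fun k _ => ?_
    show (τ.val - 1) i k * v k ∈ I
    by_cases hk : k = Idx.zero n
    · subst hk
      rw [Matrix.sub_apply, Matrix.one_apply_ne fun h => hi (Idx.eq_zero_iff.mp h), sub_zero]
      exact apply_zero_mul_mem hΔ hIΩ hτ hi hv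
    · exact hIΩ.1.mul_right _ _ (hτ.2.1 i k hi fun h => hk (Idx.eq_zero_iff.mpr h))
  · have h := fst_mem_JSet (hτ.2.2 v hv)
    rwa [D.hSub_fst, D.qform_fst, D.qform_fst] at h

lemma conj_mem_principalCongruence (hΔ : D.IsFormParam Δ) (hIΩ : D.IsFormIdeal Δ I Ω)
    (hσ : σ ∈ D.tildeU Δ I Ω n) (hτ : τ ∈ D.principalCongruence Δ I Ω n) :
    σ * τ * σ⁻¹ ∈ D.principalCongruence Δ I Ω n := by
  have hσ' := inv_mem_unitary hΔ hσ.1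
  refine ⟨mul_mem_unitary hΔ (mul_mem_unitary hΔ hσ.1 hτ.1) hσ', fun i j hi hj => ?_,
    fun u hu => ?_⟩
  · have hd := mulVec_sub_mem_MIO hΔ hIΩ hτ (mulVec_mem_MRD hΔ hσ' (hΔ.single_mem_MRD hj 1))
    have h := mulVec_apply_mem hΔ hIΩ hσ.1 hd hi
    rwa [← add_sub_cancel_left (Pi.single j 1) (σ.val *ᵥ _), ← conj_mulVec, Pi.sub_apply,
      Matrix.mulVec_single_one, Pi.single_apply] at h
  · obtain ⟨v, rfl⟩ : ∃ v, u = σ.val *ᵥ v := ⟨_, (mulVec_mulVec_inv σ u).symm⟩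
    have hv : v ∈ MRD Δ n := by simpa using mulVec_mem_MRD hΔ hσ' hu
    have hd := mulVec_sub_mem_MIO hΔ hIΩ hτ hv
    rw [conj_mulVec, mulVec_inv_mulVec]
    refine hIΩ.hSub_qform_add_mem hΔ hu hv hd.1 (fun i hi => mulVec_apply_mem hΔ hIΩ hσ.1 hd hi)
      (hσ.1.1 _ _) ?_ (hσ.2 _ hd).1
    rw [add_sub_cancel]
    exact hτ.2.2 v hv

end PrincipalCongruence

end OddFormRingData

theorem statement11_general {R : Type*} [Ring R] (D : OddFormRingData R)
    (Δ : Set (R × R)) (hΔ : D.IsFormParam Δ) (n : ℕ)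
    (I : Set R) (Ω : Set (R × R)) (hIΩ : D.IsFormIdeal Δ I Ω) :
    D.principalCongruence Δ I Ω n ⊆ D.tildeU Δ I Ω n ∧
    ∀ σ ∈ D.tildeU Δ I Ω n, ∀ τ ∈ D.principalCongruence Δ I Ω n,
      σ * τ * σ⁻¹ ∈ D.principalCongruence Δ I Ω n := by
  refine ⟨fun τ hτ => ⟨hτ.1, fun u hu => ?_⟩,
    fun σ hσ τ hτ => OddFormRingData.conj_mem_principalCongruence hΔ hIΩ hσ hτ⟩
  have hu : u ∈ MRD Δ n := hIΩ.JSet_subset hu.2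
  exact ⟨hτ.2.2 u hu, OddFormRingData.inv_qform_sub_mem hΔ hIΩ hτ hu⟩

/-- The principal congruence subgroup `U_{2n+1}((R, Δ), (I, Ω))` is a normal subgroup of
`Ũ_{2n+1}((R, Δ), (I, Ω))`. -/
theorem statement11 {R : Type*} [Ring R] [Nontrivial R] (D : OddFormRingData R)
    (Δ : Set (R × R)) (hΔ : D.IsFormParam Δ) (n : ℕ)
    (I : Set R) (Ω : Set (R × R)) (hIΩ : D.IsFormIdeal Δ I Ω) :
    D.principalCongruence Δ I Ω n ⊆ D.tildeU Δ I Ω n ∧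
    ∀ σ ∈ D.tildeU Δ I Ω n, ∀ τ ∈ D.principalCongruence Δ I Ω n,
      σ * τ * σ⁻¹ ∈ D.principalCongruence Δ I Ω n :=
  statement11_general D Δ hΔ n I Ω hIΩ
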